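/- Let Z_1, …, Z_m be exchangeable real-valued random variables on a probability space, and let k ∈ {1, …, m}. Then P( #{ j ∈ {1, …, m} : Z_j < Z_m } ≤ k − 1 ) ≥ k/m. -/

import Mathlib

/-!
In every tuple `v : ι → α` of `m` values and for every `k ≤ m`, at least `k` indices have
rank count `< k`. Hence the `m` events `{rank count of Z i < k}` have probabilities summing to
at least `k`; by exchangeability they all have the probability of the event for the last
coordinate, which is therefore at least `k / m`.
-/

open Finset MeasureTheory
open scoped ENNReal

def rankCount {ι α : Type*} [Fintype ι] [LinearOrder α] (v : ι → α) (i : ι) : ℕ :=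
  #{j | v j < v i}

section rankCount

variable {ι α : Type*} [Fintype ι] [LinearOrder α]

lemma rankCount_comp_perm (v : ι → α) (π : Equiv.Perm ι) (i : ι) :
    rankCount (v ∘ π) i = rankCount v (π i) := by
  simp only [rankCount, card_filter, Function.comp_apply]
  exact Equiv.sum_comp π fun j => if v j < v (π i) then 1 else 0

lemma le_card_rankCount_lt (v : ι → α) {k : ℕ} (hk : k ≤ Fintype.card ι) :
    k ≤ #{i | rankCount v i < k} := by
  by_cases hall : ∀ i, rankCount v i < k
  · simpa [hall] using hk
  obtain ⟨i₁, hi₁⟩ := not_forall.mp hall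
  -- The smallest value among the indices of rank count `≥ k` has `≥ k` values below it,
  -- and all of those have rank count `< k`.
  obtain ⟨i₀, hi₀, hmin⟩ := exists_min_image {i | k ≤ rankCount v i} v
    ⟨i₁, by simpa using hi₁⟩
  simp only [mem_filter, mem_univ, true_and] at hi₀ hmin
  refine hi₀.trans (card_le_card fun j hj => ?_)
  simp only [mem_filter, mem_univ, true_and] at hj ⊢
  by_contra! hjk
  exact (hmin j hjk).not_gt hj

lemma measurable_rankCount [TopologicalSpace α] [OrderClosedTopology α]
    [SecondCountableTopology α] [MeasurableSpace α] [OpensMeasurableSpace α] (i : ι) :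
    Measurable fun v : ι → α => rankCount v i := by
  simp only [rankCount, card_filter]
  exact Finset.measurable_sum _ fun j _ =>
    Measurable.ite (measurableSet_lt (measurable_pi_apply j) (measurable_pi_apply i))
      measurable_const measurable_const

end rankCount

open Classical in
lemma natCast_le_sum_measure {Ω ι : Type*} [MeasurableSpace Ω] [Fintype ι]
    (μ : Measure Ω) [IsProbabilityMeasure μ] {A : ι → Set Ω} (hA : ∀ i, MeasurableSet (A i))
    {k : ℕ} (hk : ∀ ω, k ≤ #{i | ω ∈ A i}) :
    (k : ℝ≥0∞) ≤ ∑ i, μ (A i) := by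
  have hcount : ∀ ω, (#{i | ω ∈ A i} : ℝ≥0∞) = ∑ i, (A i).indicator 1 ω := fun ω => by
    simp [Set.indicator_apply]
  calc (k : ℝ≥0∞) = ∫⁻ _, (k : ℝ≥0∞) ∂μ := by simp
    _ ≤ ∫⁻ ω, ∑ i, (A i).indicator 1 ω ∂μ :=
        lintegral_mono fun ω => (hcount ω) ▸ Nat.cast_le.mpr (hk ω)
    _ = ∑ i, μ (A i) := by
        rw [lintegral_finsetSum _ fun i _ => measurable_one.indicator (hA i)]
        simp_rw [lintegral_indicator_one (hA _)]

def Exchangeable {Ω ι α : Type*} [MeasurableSpace Ω] [MeasurableSpace α]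
    (μ : Measure Ω) (Z : ι → Ω → α) : Prop :=
  ∀ π : Equiv.Perm ι, μ.map (fun ω i => Z (π i) ω) = μ.map (fun ω i => Z i ω)

namespace Exchangeable

variable {Ω ι α : Type*} [MeasurableSpace Ω] [MeasurableSpace α] {μ : Measure Ω}
  {Z : ι → Ω → α}

lemma measure_preimage_perm (h : Exchangeable μ Z) (hZ : ∀ i, Measurable (Z i))
    (π : Equiv.Perm ι) {B : Set (ι → α)} (hB : MeasurableSet B) :
    μ ((fun ω i => Z (π i) ω) ⁻¹' B) = μ ((fun ω i => Z i ω) ⁻¹' B) := by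
  rw [← Measure.map_apply (measurable_pi_lambda _ fun i => hZ (π i)) hB, h π,
    Measure.map_apply (measurable_pi_lambda _ hZ) hB]

lemma measure_rankCount_lt_eq [Fintype ι] [DecidableEq ι] [LinearOrder α] [TopologicalSpace α]
    [OrderClosedTopology α] [SecondCountableTopology α] [OpensMeasurableSpace α]
    (h : Exchangeable μ Z) (hZ : ∀ i, Measurable (Z i)) (i j : ι) (k : ℕ) :
    μ {ω | rankCount (Z · ω) i < k} = μ {ω | rankCount (Z · ω) j < k} := by
  have hB : MeasurableSet {v : ι → α | rankCount v j < k} :=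
    measurable_rankCount j measurableSet_Iio
  have hpre : {ω | rankCount (Z · ω) i < k} =
      (fun ω l => Z (Equiv.swap i j l) ω) ⁻¹' {v | rankCount v j < k} := by
    ext ω
    change rankCount (Z · ω) i < k ↔ rankCount ((Z · ω) ∘ Equiv.swap i j) j < k
    rw [rankCount_comp_perm, Equiv.swap_apply_right]
  rw [hpre, h.measure_preimage_perm hZ _ hB]
  rfl

end Exchangeable

/-- Under exchangeability, the last of `m = n + 1` scores falls among the `k` smallest
(in the rank-count sense) with probability at least `k / m`: if `Z_1, …, Z_m` are
exchangeable and `k ∈ {1, …, m}`, then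
`P(#{j : Z j < Z m} ≤ k - 1) ≥ k / m`. -/
theorem rank_event_prob_ge
    {Ω : Type*} [MeasurableSpace Ω] (P : Measure Ω) [IsProbabilityMeasure P]
    (n : ℕ) (Z : Fin (n + 1) → Ω → ℝ)
    (hZ : ∀ i, Measurable (Z i))
    (hexch : ∀ π : Equiv.Perm (Fin (n + 1)),
      Measure.map (fun ω => fun i => Z (π i) ω) P = Measure.map (fun ω => fun i => Z i ω) P)
    (k : ℕ) (hk1 : 1 ≤ k) (hkm : k ≤ n + 1) :
    ENNReal.ofReal ((k : ℝ) / ((n : ℝ) + 1)) ≤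
      P {ω | (Finset.univ.filter
        fun j : Fin (n + 1) => Z j ω < Z (Fin.last n) ω).card ≤ k - 1} := by
  have hexch' : Exchangeable P Z := hexch
  set A : Fin (n + 1) → Set Ω := fun i => {ω | rankCount (Z · ω) i < k}
  have hA : ∀ i, MeasurableSet (A i) := fun i =>
    (measurable_rankCount i).comp (measurable_pi_lambda _ hZ) measurableSet_Iio
  have hsum : (k : ℝ≥0∞) ≤ (n + 1) * P (A (Fin.last n)) :=
    calc (k : ℝ≥0∞) ≤ ∑ i, P (A i) := natCast_le_sum_measure P hA fun ω => by
          convert le_card_rankCount_lt (Z · ω) (by simpa using hkm) using 4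
          exact Iff.rfl
      _ = (n + 1) * P (A (Fin.last n)) := by
          simp [A, hexch'.measure_rankCount_lt_eq hZ _ (Fin.last n)]
  have hevent : {ω | #{j | Z j ω < Z (Fin.last n) ω} ≤ k - 1} = A (Fin.last n) := by
    ext ω
    exact Nat.le_sub_one_iff_lt hk1
  have hfrac : ENNReal.ofReal ((k : ℝ) / ((n : ℝ) + 1)) = k / (n + 1) := by
    rw [ENNReal.ofReal_div_of_pos (by positivity), ENNReal.ofReal_add (by positivity) zero_le_one]
    simp
  rw [hevent, hfrac]
  exact ENNReal.div_le_of_le_mul' hsum
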